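/- Let n ≥ 2 and let B = (b_{ij}) be a real symmetric n × n matrix with nonnegative entries which is irreducible, and assume λ_2(B) ≤ 0, where λ_2(B) is the second largest eigenvalue of B counted with multiplicity. Let G(B) be the graph on vertex set {1,…,n} (with no self-loops) in which i and j are adjacent if and only if i ≠ j and b_{ij} > 0. Then G(B) is a complete k-partite graph for some k with 2 ≤ k ≤ n. -/

import Mathlib

/-- The second largest value (counted with multiplicity) of a family `v : Fin n → ℝ`:
sort the values in increasing order and take the entry at position `n - 2`. -/
noncomputable def secondLargest {n : ℕ} (v : Fin n → ℝ) : ℝ :=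
  (Multiset.sort (↑(List.ofFn v) : Multiset ℝ) (· ≤ ·)).getD (n - 2) 0

/-- The graph (with no self-loops) induced by a matrix `B`: vertices `i ≠ j` are adjacent
iff `B i j > 0` (for symmetric `B` this is the condition `b_{ij} > 0`). -/
def graphOf {n : ℕ} (B : Matrix (Fin n) (Fin n) ℝ) : SimpleGraph (Fin n) where
  Adj i j := i ≠ j ∧ 0 < B i j ∧ 0 < B j i
  symm := by
    constructor
    intro i j h
    exact ⟨h.1.symm, h.2.2, h.2.1⟩
  loopless := by
    constructor
    intro i h
    exact h.1 rfl

open Matrix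

lemma aux_one_pos {n : ℕ} (hn : 2 ≤ n) (μ : Fin n → ℝ)
    (h : secondLargest μ ≤ 0) :
    ∃ t : Fin n, ∀ i, i ≠ t → μ i ≤ 0 := by
  classical
  set l := Multiset.sort (↑(List.ofFn μ) : Multiset ℝ) (· ≤ ·) with hl
  have hlen : l.length = n := by
    simp [hl, Multiset.length_sort]
  have hsort : l.Pairwise (· ≤ ·) := Multiset.pairwise_sort ..
  have h2 : l.getD (n-2) 0 = l.get ⟨n-2, by omega⟩ := by
    rw [List.getD_eq_getElem l 0 (by omega)]; simp
  have hle : ∀ m (hm : m < n - 1), l.get ⟨m, by omega⟩ ≤ 0 := by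
    intro m hm
    have h1 : l.get ⟨m, by omega⟩ ≤ l.get ⟨n-2, by omega⟩ :=
      hsort.rel_get_of_le (by simp [Fin.le_def]; omega)
    have := h
    rw [secondLargest, ← hl, h2] at this
    linarith
  have hcoeapp : (↑l : Multiset ℝ) = ↑(l.take (n-1)) + ↑(l.drop (n-1)) := by
    conv_lhs => rw [← List.take_append_drop (n-1) l]
    rw [← Multiset.coe_add]
  have hcount : Multiset.countP (fun x => 0 < x) (↑l : Multiset ℝ) ≤ 1 := by
    rw [hcoeapp, Multiset.countP_add]
    have htake : Multiset.countP (fun x => 0 < x) (↑(l.take (n-1)) : Multiset ℝ) = 0 := by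
      rw [Multiset.countP_eq_zero]
      intro a ha
      simp only [Multiset.mem_coe] at ha
      obtain ⟨m, hm, rfl⟩ := List.mem_iff_getElem.mp ha
      have hm' : m < n - 1 := by
        have := hm; simp [List.length_take, hlen] at this; omega
      have := hle m hm'
      rw [List.get_eq_getElem] at this
      rw [List.getElem_take]
      simpa using this
    have hdrop : Multiset.countP (fun x => 0 < x) (↑(l.drop (n-1)) : Multiset ℝ) ≤ 1 := by
      refine le_trans (Multiset.countP_le_card _ _) ?_
      have : (l.drop (n-1)).length ≤ 1 := by simp [hlen]; omega
      simpa using this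
    omega
  have hcard : (Finset.univ.filter fun i => 0 < μ i).card ≤ 1 := by
    have e1 : (↑l : Multiset ℝ) = Multiset.map μ (Finset.univ.val) := by
      rw [hl, Multiset.sort_eq]
      rw [Fin.univ_def]
      simp [List.ofFn_eq_map]
    rw [e1, Multiset.countP_map] at hcount
    simpa [Finset.card, Finset.filter_val] using hcount
  rcases Finset.eq_empty_or_nonempty (Finset.univ.filter fun i => 0 < μ i) with he | ⟨t, ht⟩
  · refine ⟨⟨0, by omega⟩, fun i _ => le_of_not_gt fun hp => ?_⟩
    have : i ∈ Finset.univ.filter fun i => 0 < μ i := by simp [hp]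
    simp [he] at this
  · exact ⟨t, fun i hi => le_of_not_gt fun hp =>
      hi (Finset.card_le_one.mp hcard i (by simp [hp]) t ht)⟩

lemma aux_symm {n : ℕ} {B : Matrix (Fin n) (Fin n) ℝ} (hB : B.IsHermitian) (i j : Fin n) :
    B i j = B j i := by
  have := congrFun (congrFun hB j) i
  simpa [Matrix.conjTranspose_apply] using this

lemma aux_eig {n : ℕ} {B : Matrix (Fin n) (Fin n) ℝ} (hB : B.IsHermitian) (j : Fin n) :
    B *ᵥ (fun m => hB.eigenvectorBasis j m) = hB.eigenvalues j • (fun m => hB.eigenvectorBasis j m) :=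
  hB.mulVec_eigenvectorBasis j

lemma aux_ortho {n : ℕ} {B : Matrix (Fin n) (Fin n) ℝ} (hB : B.IsHermitian) (i j : Fin n) :
    (fun m => hB.eigenvectorBasis i m) ⬝ᵥ (fun m => hB.eigenvectorBasis j m)
      = if i = j then 1 else 0 := by
  have := orthonormal_iff_ite.mp hB.eigenvectorBasis.orthonormal i j
  simpa [PiLp.inner_apply, RCLike.inner_apply, dotProduct, mul_comm] using this

lemma aux_expand {n : ℕ} {B : Matrix (Fin n) (Fin n) ℝ} (hB : B.IsHermitian) (x : Fin n → ℝ) :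
    x = ∑ i, ((fun m => hB.eigenvectorBasis i m) ⬝ᵥ x) • (fun m => hB.eigenvectorBasis i m) := by
  have h := hB.eigenvectorBasis.sum_repr (WithLp.toLp 2 x)
  funext m
  have h' := congrFun (congrArg (fun (z : EuclideanSpace ℝ (Fin n)) => (z : Fin n → ℝ)) h) m
  simp only [OrthonormalBasis.repr_apply_apply, PiLp.inner_apply, RCLike.inner_apply,
    conj_trivial] at h'
  simp [Finset.sum_apply, dotProduct, mul_comm] at h' ⊢
  exact h'.symm

lemma aux_dot_sum {n : ℕ} (x : Fin n → ℝ) (f : Fin n → (Fin n → ℝ)) :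
    x ⬝ᵥ (∑ i, f i) = ∑ i, x ⬝ᵥ f i := by
  simp only [dotProduct, Finset.sum_apply, Finset.mul_sum]
  rw [Finset.sum_comm]

-- quadratic form expansion
lemma aux_quad {n : ℕ} {B : Matrix (Fin n) (Fin n) ℝ} (hB : B.IsHermitian) (x : Fin n → ℝ) :
    x ⬝ᵥ (B *ᵥ x) = ∑ i, hB.eigenvalues i * ((fun m => hB.eigenvectorBasis i m) ⬝ᵥ x)^2 := by
  set u : Fin n → (Fin n → ℝ) := fun i m => hB.eigenvectorBasis i m with hu
  set c : Fin n → ℝ := fun i => u i ⬝ᵥ x with hc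
  have hBx : B *ᵥ x = ∑ i, (c i * hB.eigenvalues i) • u i := by
    conv_lhs => rw [aux_expand hB x]
    rw [show ∑ i, (u i ⬝ᵥ x) • u i = ∑ i, c i • u i from rfl]
    rw [show B *ᵥ (∑ i, c i • u i) = B.mulVecLin (∑ i, c i • u i) from rfl]
    rw [map_sum]
    apply Finset.sum_congr rfl
    intro i _
    rw [LinearMap.map_smul, mulVecLin_apply, aux_eig hB i, smul_smul]
  rw [hBx, aux_dot_sum]
  apply Finset.sum_congr rfl
  intro i _
  rw [dotProduct_smul, smul_eq_mul, dotProduct_comm]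
  show c i * hB.eigenvalues i * c i = hB.eigenvalues i * (c i) ^ 2
  ring

lemma aux_parseval {n : ℕ} {B : Matrix (Fin n) (Fin n) ℝ} (hB : B.IsHermitian) (x : Fin n → ℝ) :
    x ⬝ᵥ x = ∑ i, ((fun m => hB.eigenvectorBasis i m) ⬝ᵥ x)^2 := by
  set u : Fin n → (Fin n → ℝ) := fun i m => hB.eigenvectorBasis i m with hu
  set c : Fin n → ℝ := fun i => u i ⬝ᵥ x with hc
  calc x ⬝ᵥ x = x ⬝ᵥ (∑ i, c i • u i) := congrArg (fun y => x ⬝ᵥ y) (aux_expand hB x)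
    _ = ∑ i, x ⬝ᵥ (c i • u i) := aux_dot_sum x _
    _ = ∑ i, c i ^ 2 := by
        apply Finset.sum_congr rfl
        intro i _
        rw [dotProduct_smul, smul_eq_mul, dotProduct_comm]
        show c i * c i = (c i) ^ 2
        ring
lemma aux_single_quad {n : ℕ} (B : Matrix (Fin n) (Fin n) ℝ) (p q : Fin n) (α γ : ℝ) :
    Pi.single p α ⬝ᵥ (B *ᵥ Pi.single q γ) = α * (B p q * γ) := by
  rw [single_dotProduct, mulVec_single]
  simp


theorem stmt17 {n : ℕ} (hn : 2 ≤ n) (B : Matrix (Fin n) (Fin n) ℝ)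
    (hB : B.IsHermitian) (hpos : ∀ i j, 0 ≤ B i j)
    (hirr : (graphOf B).Connected)
    (hl2 : secondLargest hB.eigenvalues ≤ 0) :
    ∃ k : ℕ, 2 ≤ k ∧ k ≤ n ∧
      ∃ c : Fin n → Fin k, Function.Surjective c ∧
        ∀ i j, (graphOf B).Adj i j ↔ c i ≠ c j := by
  classical
  set G := graphOf B with hG
  have hnadj_zero : ∀ a b : Fin n, a ≠ b → ¬ G.Adj a b → B a b = 0 := by
    intro a b hne hnadj
    by_contra hz
    have h1 : 0 < B a b := lt_of_le_of_ne (hpos a b) (Ne.symm hz)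
    exact hnadj ⟨hne, h1, (aux_symm hB a b) ▸ h1⟩
  obtain ⟨p0, q0, hpq⟩ : ∃ p q, G.Adj p q := by
    have hne : (⟨0, by omega⟩ : Fin n) ≠ ⟨1, by omega⟩ := by simp [Fin.ext_iff]
    obtain ⟨wk⟩ := hirr ⟨0, by omega⟩ ⟨1, by omega⟩
    cases wk with
    | cons h _ => exact ⟨_, _, h⟩
  obtain ⟨t, ht⟩ := aux_one_pos hn hB.eigenvalues hl2
  set μ := hB.eigenvalues with hμ
  set u : Fin n → (Fin n → ℝ) := fun i m => hB.eigenvectorBasis i m with hu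
  have hquad_entry : ∀ y : Fin n → ℝ, y ⬝ᵥ (B *ᵥ y) = ∑ p, ∑ q, y p * (B p q * y q) := by
    intro y; simp [dotProduct, mulVec, Finset.mul_sum]
  have HK : ∀ a b c : Fin n, a ≠ b → b ≠ c → G.Adj a c → ¬ G.Adj a b → ¬ G.Adj b c → False := by
    by_cases hlam : 0 < μ t
    · -- main case : a Perron eigenvector argument
      set v : Fin n → ℝ := u t with hv
      have hv1 : v ⬝ᵥ v = 1 := by simpa using aux_ortho hB t t
      have hveig : B *ᵥ v = μ t • v := aux_eig hB t
      set w : Fin n → ℝ := fun i => |v i| with hw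
      have hwnn : ∀ i, 0 ≤ w i := fun i => abs_nonneg _
      have hww : w ⬝ᵥ w = 1 := by
        rw [← hv1]
        exact Finset.sum_congr rfl fun i _ => abs_mul_abs_self _
      have hquadv : v ⬝ᵥ (B *ᵥ v) = μ t := by
        rw [hveig, dotProduct_smul, smul_eq_mul, hv1, mul_one]
      have hquadw_ge : μ t ≤ w ⬝ᵥ (B *ᵥ w) := by
        rw [← hquadv, hquad_entry, hquad_entry]
        apply Finset.sum_le_sum; intro p _
        apply Finset.sum_le_sum; intro q _
        calc v p * (B p q * v q) ≤ |v p * (B p q * v q)| := le_abs_self _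
          _ = w p * (B p q * w q) := by
              rw [abs_mul, abs_mul, abs_of_nonneg (hpos p q)]
      set d : Fin n → ℝ := fun i => u i ⬝ᵥ w with hd
      have hsum1 : ∑ i, d i ^ 2 = 1 := by rw [← aux_parseval hB w, hww]
      have hquadw : w ⬝ᵥ (B *ᵥ w) = ∑ i, μ i * d i ^ 2 := aux_quad hB w
      have hmule : ∀ j, μ j ≤ μ t := by
        intro j
        by_cases hjt : j = t
        · subst hjt; exact le_refl _
        · exact le_trans (ht j hjt) (le_of_lt hlam)
      have hzero : ∀ i, i ≠ t → d i = 0 := by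
        intro i hit
        have hterm : ∀ j ∈ Finset.univ, 0 ≤ (μ t - μ j) * d j ^ 2 := fun j _ =>
          mul_nonneg (by linarith [hmule j]) (sq_nonneg _)
        have hsum0 : ∑ j, (μ t - μ j) * d j ^ 2 ≤ 0 := by
          have he : ∑ j, (μ t - μ j) * d j ^ 2
              = μ t * (∑ j, d j ^ 2) - ∑ j, μ j * d j ^ 2 := by
            rw [Finset.mul_sum, ← Finset.sum_sub_distrib]
            exact Finset.sum_congr rfl fun j _ => by ring
          rw [he, hsum1, mul_one, ← hquadw]
          linarith
        have hz := (Finset.sum_eq_zero_iff_of_nonneg hterm).mp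
          (le_antisymm hsum0 (Finset.sum_nonneg hterm)) i (Finset.mem_univ i)
        have hpos' : (0:ℝ) < μ t - μ i := by linarith [ht i hit]
        have : d i ^ 2 = 0 := by
          rcases mul_eq_zero.mp hz with h | h
          · exact absurd h (ne_of_gt hpos')
          · exact h
        exact pow_eq_zero_iff (by norm_num) |>.mp this
      have hwv : w = (v ⬝ᵥ w) • v := by
        conv_lhs => rw [aux_expand hB w]
        rw [Finset.sum_eq_single t (fun i _ hit => by
            rw [show ((fun m => hB.eigenvectorBasis i m) ⬝ᵥ w) = d i from rfl, hzero i hit,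
              zero_smul])
          (fun h => absurd (Finset.mem_univ t) h)]
      have hdt2 : (v ⬝ᵥ w) ^ 2 = 1 := by
        rw [← hsum1, Finset.sum_eq_single t (fun i _ hit => by rw [hzero i hit]; ring)
          (fun h => absurd (Finset.mem_univ t) h)]
      have hcne : v ⬝ᵥ w ≠ 0 := by
        intro h0; rw [h0] at hdt2; norm_num at hdt2
      have heigw : B *ᵥ w = μ t • w := by
        conv_lhs => rw [hwv]
        rw [mulVec_smul, hveig, smul_smul, mul_comm, ← smul_smul]
        conv_rhs => rw [hwv]
      have hwpos : ∀ i, 0 < w i := by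
        have hstep : ∀ p q : Fin n, G.Adj p q → w p = 0 → w q = 0 := by
          intro p q hadj hp0
          have h1 : (B *ᵥ w) p = 0 := by
            rw [heigw]; simp [hp0]
          have h2 : ∑ j, B p j * w j = 0 := by
            simpa [mulVec, dotProduct] using h1
          have h3 := (Finset.sum_eq_zero_iff_of_nonneg
            (fun j _ => mul_nonneg (hpos p j) (hwnn j))).mp h2 q (Finset.mem_univ q)
          rcases mul_eq_zero.mp h3 with h | h
          · exact absurd h (ne_of_gt hadj.2.1)
          · exact h
        have hwalk : ∀ p q : Fin n, G.Walk p q → w p = 0 → w q = 0 := by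
          intro p q wk
          induction wk with
          | nil => exact id
          | cons h _ ih => exact fun h0 => ih (hstep _ _ h h0)
        intro i
        rcases lt_or_eq_of_le (hwnn i) with h | h
        · exact h
        · exfalso
          have hall0 : ∀ j, w j = 0 := fun j => by
            obtain ⟨wk⟩ := hirr i j
            exact hwalk _ _ wk h.symm
          rw [show w ⬝ᵥ w = 0 by simp [dotProduct, hall0]] at hww
          norm_num at hww
      intro a b c hab hbc hac hnab hnbc
      have hBab : B a b = 0 := hnadj_zero a b hab hnab
      have hBba : B b a = 0 := by rw [aux_symm hB b a]; exact hBab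
      have hBbc : B b c = 0 := hnadj_zero b c hbc hnbc
      have hBcb : B c b = 0 := by rw [aux_symm hB c b]; exact hBbc
      set β : ℝ := -((w a + w c) / w b) with hβ
      set x : Fin n → ℝ := Pi.single a 1 + Pi.single c 1 + Pi.single b β with hx
      have hwb := hwpos b
      have hwx : w ⬝ᵥ x = 0 := by
        rw [hx]
        simp only [dotProduct_add, dotProduct_single]
        rw [hβ]
        field_simp
        ring
      have hvx : v ⬝ᵥ x = 0 := by
        have hthis : w ⬝ᵥ x = (v ⬝ᵥ w) * (v ⬝ᵥ x) := by
          conv_lhs => rw [hwv]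
          rw [smul_dotProduct, smul_eq_mul]
        rw [hwx] at hthis
        exact (mul_eq_zero.mp hthis.symm).resolve_left hcne
      have hquadx_le : x ⬝ᵥ (B *ᵥ x) ≤ 0 := by
        rw [aux_quad hB x]
        apply Finset.sum_nonpos
        intro i _
        by_cases hit : i = t
        · subst hit
          rw [show ((fun m => hB.eigenvectorBasis i m) ⬝ᵥ x) = v ⬝ᵥ x from rfl, hvx]
          simp
        · exact mul_nonpos_of_nonpos_of_nonneg (ht i hit) (sq_nonneg _)
      have hquadx : x ⬝ᵥ (B *ᵥ x)
          = 1 * (B a a * 1) + 1 * (B a c * 1) + 1 * (B a b * β)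
          + 1 * (B c a * 1) + 1 * (B c c * 1) + 1 * (B c b * β)
          + β * (B b a * 1) + β * (B b c * 1) + β * (B b b * β) := by
        rw [hx]
        simp only [add_dotProduct, mulVec_add, dotProduct_add, aux_single_quad]
        ring
      rw [hBab, hBba, hBbc, hBcb] at hquadx
      nlinarith [hpos a a, hpos c c, hpos b b, hac.2.1, hac.2.2, sq_nonneg β,
        mul_nonneg (hpos b b) (sq_nonneg β)]
    · -- degenerate case : all eigenvalues nonpositive, contradiction with the edge
      exfalso
      have hall : ∀ i, μ i ≤ 0 := by
        intro i
        by_cases hit : i = t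
        · subst hit; exact le_of_not_gt hlam
        · exact ht i hit
      set x : Fin n → ℝ := Pi.single p0 1 + Pi.single q0 1 with hx
      have hle : x ⬝ᵥ (B *ᵥ x) ≤ 0 := by
        rw [aux_quad hB x]
        exact Finset.sum_nonpos fun i _ =>
          mul_nonpos_of_nonpos_of_nonneg (hall i) (sq_nonneg _)
      have hq : x ⬝ᵥ (B *ᵥ x)
          = 1 * (B p0 p0 * 1) + 1 * (B p0 q0 * 1) + 1 * (B q0 p0 * 1) + 1 * (B q0 q0 * 1) := by
        rw [hx]
        simp only [add_dotProduct, mulVec_add, dotProduct_add, aux_single_quad]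
        ring
      nlinarith [hpos p0 p0, hpos q0 q0, hpq.2.1, hpq.2.2]
  -- build the partition from the equivalence relation "not adjacent"
  let s : Setoid (Fin n) :=
    ⟨fun i j => ¬ G.Adj i j,
      ⟨fun i => G.loopless.irrefl i,
       fun {i j} h hadj => h hadj.symm,
       fun {a b c} h1 h2 hadj => by
          by_cases hab : a = b
          · exact h2 (hab ▸ hadj)
          · by_cases hbc : b = c
            · exact h1 (hbc ▸ hadj)
            · exact HK a b c hab hbc hadj h1 h2⟩⟩
  let k := Fintype.card (Quotient s)
  let e : Quotient s ≃ Fin k := Fintype.equivFin _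
  let cc : Fin n → Fin k := fun i => e (Quotient.mk s i)
  have hiff : ∀ i j, G.Adj i j ↔ cc i ≠ cc j := by
    intro i j
    constructor
    · intro hadj heq
      exact Quotient.exact (e.injective heq) hadj
    · intro hne
      by_contra hnadj
      exact hne (congrArg e (Quotient.sound hnadj))
  have hsurj : Function.Surjective cc := by
    intro y
    refine ⟨(e.symm y).out, ?_⟩
    have : Quotient.mk s ((e.symm y).out) = e.symm y := Quotient.out_eq _
    simp only [cc, this, Equiv.apply_symm_apply]
  refine ⟨k, ?_, ?_, cc, hsurj, hiff⟩
  · have h1 : cc p0 ≠ cc q0 := (hiff p0 q0).mp hpq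
    have := Fintype.one_lt_card_iff.mpr ⟨cc p0, cc q0, h1⟩
    simp only [Fintype.card_fin] at this; omega
  · have hsq : Function.Surjective (Quotient.mk s) := fun q => ⟨q.out, Quotient.out_eq q⟩
    have := Fintype.card_le_of_surjective (Quotient.mk s) hsq
    simpa [k] using this
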